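/- arXiv:1612.06591 — 4 statements merged into one kernel-verified Lean document; each statement's English description precedes it below -/
import Mathlib

section
/- For every l ∈ ℕ₀ and every real τ, the value V_l(τ) is a positive real number, and the function τ ↦ V_l(τ) is strictly monotonously decreasing on [0, ∞). -/
/-- V_l(z) := Γ((l+1+iz)/2)Γ((l+1−iz)/2) / (2 Γ((l+2+iz)/2)Γ((l+2−iz)/2)). -/
noncomputable def Vl (l : ℕ) (z : ℂ) : ℂ :=
  Complex.Gamma ((l + 1 + Complex.I * z) / 2) * Complex.Gamma ((l + 1 - Complex.I * z) / 2) /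
    (2 * Complex.Gamma ((l + 2 + Complex.I * z) / 2) * Complex.Gamma ((l + 2 - Complex.I * z) / 2))

/-!
For real τ, V_l(τ) = |Γ(w)|² / (2 |Γ(w + 1/2)|²) with w = (l + 1 + iτ)/2, which is positive.
Gauss's product formula for Γ turns this ratio into
V_l(τ) = lim_n (1/2n) ∏_{j ≤ n} r_{l+1+2j}(τ), where r_a(τ) = `shiftRatio a τ`
is positive and strictly decreasing on τ ≥ 0. Splitting off the factor r_{l+1} writes V_l as a
strictly decreasing positive function times a pointwise limit of nonincreasing functions.
-/

open Complex ComplexConjugate Filter Topology Finset Set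
open scoped Nat

namespace Complex

lemma Gamma_mul_Gamma_conj (z : ℂ) : Gamma z * Gamma (conj z) = normSq (Gamma z) := by
  rw [Gamma_conj, mul_conj]

lemma normSq_GammaSeq {n : ℕ} (hn : n ≠ 0) (z : ℂ) :
    normSq (GammaSeq z n) =
      ((n : ℝ) ^ z.re) ^ 2 * (n ! : ℝ) ^ 2 / ∏ j ∈ range (n + 1), normSq (z + j) := by
  rw [GammaSeq, map_div₀, map_mul, map_prod, normSq_eq_norm_sq ((n : ℂ) ^ z),
    norm_natCast_cpow_of_pos (Nat.pos_of_ne_zero hn), normSq_natCast, sq, sq]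

lemma tendsto_normSq_Gamma_div {z w : ℂ} (hw : Gamma w ≠ 0) :
    Tendsto (fun n : ℕ => ((n : ℝ) ^ (z.re - w.re)) ^ 2 *
        ∏ j ∈ range (n + 1), normSq (w + j) / normSq (z + j))
      atTop (𝓝 (normSq (Gamma z) / normSq (Gamma w))) := by
  have hlim := ((continuous_normSq.tendsto _).comp (GammaSeq_tendsto_Gamma z)).div
    ((continuous_normSq.tendsto _).comp (GammaSeq_tendsto_Gamma w)) (normSq_pos.2 hw).ne'
  refine hlim.congr' ?_
  filter_upwards [eventually_ne_atTop 0] with n hn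
  have hn' : (0 : ℝ) < n := by positivity
  rw [Pi.div_apply, Function.comp_apply, Function.comp_apply, normSq_GammaSeq hn,
    normSq_GammaSeq hn, prod_div_distrib, Real.rpow_sub hn', div_pow, div_div_div_eq,
    div_mul_div_comm]
  field_simp

end Complex

lemma StrictAntiOn.of_tendsto_mul {α : Type*} [Preorder α] {s : Set α} {h F : α → ℝ}
    {K : ℕ → α → ℝ} (hh : StrictAntiOn h s) (hh_pos : ∀ x ∈ s, 0 < h x)
    (hK : ∀ n, AntitoneOn (K n) s) (hF_pos : ∀ x ∈ s, 0 < F x)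
    (hlim : ∀ x ∈ s, Tendsto (fun n => h x * K n x) atTop (𝓝 (F x))) :
    StrictAntiOn F s := by
  have hKlim : ∀ x ∈ s, Tendsto (fun n => K n x) atTop (𝓝 (F x / h x)) := fun x hx => by
    simpa [(hh_pos x hx).ne'] using (hlim x hx).div_const (h x)
  intro x hx y hy hxy
  have hquot : F y / h y ≤ F x / h x :=
    le_of_tendsto_of_tendsto' (hKlim y hy) (hKlim x hx) fun n => hK n hx hy hxy.le
  calc F y = h y * (F y / h y) := (mul_div_cancel₀ _ (hh_pos y hy).ne').symm
    _ < h x * (F y / h y) := by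
      gcongr
      · exact div_pos (hF_pos y hy) (hh_pos y hy)
      · exact hh hx hy hxy
    _ ≤ h x * (F x / h x) := by gcongr; exact (hh_pos x hx).le
    _ = F x := mul_div_cancel₀ _ (hh_pos x hx).ne'

noncomputable def shiftRatio (a τ : ℝ) : ℝ := ((a + 1) ^ 2 + τ ^ 2) / (a ^ 2 + τ ^ 2)

lemma shiftRatio_pos {a : ℝ} (ha : 0 < a) (τ : ℝ) : 0 < shiftRatio a τ := by
  unfold shiftRatio; positivity

lemma strictAntiOn_shiftRatio {a : ℝ} (ha : 0 < a) : StrictAntiOn (shiftRatio a) (Ici 0) := by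
  intro x hx y _ hxy
  have hx : 0 ≤ x := hx
  unfold shiftRatio
  rw [div_lt_div_iff₀ (by positivity) (by positivity)]
  nlinarith [mul_pos (show 0 < 2 * a + 1 by linarith) (show 0 < y ^ 2 - x ^ 2 by nlinarith)]

lemma antitoneOn_prod_shiftRatio {ι : Type*} (s : Finset ι) {a : ι → ℝ}
    (ha : ∀ i ∈ s, 0 < a i) :
    AntitoneOn (fun τ => ∏ i ∈ s, shiftRatio (a i) τ) (Ici 0) := fun _ hx y hy hxy =>
  Finset.prod_le_prod (fun i hi => (shiftRatio_pos (ha i hi) y).le)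
    fun i hi => (strictAntiOn_shiftRatio (ha i hi)).antitoneOn hx hy hxy

lemma Vl_ofReal (l : ℕ) (τ : ℝ) :
    Vl l τ = ((normSq (Gamma ((l + 1 + I * τ) / 2)) /
      (2 * normSq (Gamma ((l + 2 + I * τ) / 2))) : ℝ) : ℂ) := by
  have hconj (c : ℂ) (hc : conj c = c) : (c - I * τ) / 2 = conj ((c + I * τ) / 2) := by
    rw [map_div₀, map_add, hc, map_mul, conj_I, conj_ofReal, map_ofNat]; ring
  rw [Vl, hconj _ (by simp), hconj _ (by simp [map_ofNat]), mul_assoc, Gamma_mul_Gamma_conj,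
    Gamma_mul_Gamma_conj]
  push_cast; rfl

lemma Real.rpow_neg_half_sq (x : ℝ) (hx : 0 ≤ x) : (x ^ (-(1 / 2) : ℝ)) ^ 2 = x⁻¹ := by
  rw [← Real.rpow_natCast, ← Real.rpow_mul hx]
  norm_num [Real.rpow_neg_one]

lemma normSq_div_normSq_eq_shiftRatio (l j : ℕ) (τ : ℝ) :
    normSq ((l + 2 + I * τ) / 2 + j) / normSq ((l + 1 + I * τ) / 2 + j) =
      shiftRatio (l + 1 + 2 * j) τ := by
  rw [show (l + 2 + I * τ) / 2 + j = ((l + 2 + 2 * j) / 2 : ℝ) + (τ / 2 : ℝ) * I by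
      push_cast; ring,
    show (l + 1 + I * τ) / 2 + j = ((l + 1 + 2 * j) / 2 : ℝ) + (τ / 2 : ℝ) * I by
      push_cast; ring,
    normSq_add_mul_I, normSq_add_mul_I, shiftRatio]
  field_simp
  ring

lemma tendsto_Vl_ofReal_re (l : ℕ) (τ : ℝ) :
    Tendsto (fun n : ℕ => shiftRatio (l + 1) τ *
        ((∏ j ∈ range n, shiftRatio (l + 3 + 2 * j) τ) / (2 * n)))
      atTop (𝓝 (Vl l τ).re) := by
  have hw : Gamma ((l + 2 + I * τ) / 2) ≠ 0 :=
    Gamma_ne_zero_of_re_pos (by simp; positivity)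
  have hre : ((l + 1 + I * τ) / 2 : ℂ).re - ((l + 2 + I * τ) / 2 : ℂ).re = -(1 / 2) := by
    simp; ring
  have hlim := (tendsto_normSq_Gamma_div (z := (l + 1 + I * τ) / 2) hw).div_const 2
  rw [Vl_ofReal, ofReal_re, div_mul_eq_div_div_swap]
  refine hlim.congr fun n => ?_
  have hprod : ∏ j ∈ range (n + 1), shiftRatio (l + 1 + 2 * j) τ =
      shiftRatio (l + 1) τ * ∏ j ∈ range n, shiftRatio (l + 3 + 2 * j) τ := by
    rw [prod_range_succ', mul_comm]
    push_cast
    ring_nf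
  simp only [hre, Real.rpow_neg_half_sq _ n.cast_nonneg, normSq_div_normSq_eq_shiftRatio, hprod]
  ring

lemma Vl_ofReal_re_pos (l : ℕ) (τ : ℝ) : 0 < (Vl l τ).re := by
  rw [Vl_ofReal, ofReal_re]
  exact div_pos (normSq_pos.2 (Gamma_ne_zero_of_re_pos (by simp; positivity)))
    (mul_pos two_pos (normSq_pos.2 (Gamma_ne_zero_of_re_pos (by simp; positivity))))

/-- For every l ∈ ℕ₀ and every real τ the value V_l(τ) is a positive real number, and
τ ↦ V_l(τ) is strictly monotonously decreasing on [0, ∞). -/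
theorem Vl_real_pos_strictAnti (l : ℕ) :
    (∀ τ : ℝ, (Vl l (τ : ℂ)).im = 0 ∧ 0 < (Vl l (τ : ℂ)).re) ∧
    StrictAntiOn (fun τ : ℝ => (Vl l (τ : ℂ)).re) (Set.Ici 0) := by
  refine ⟨fun τ => ⟨by rw [Vl_ofReal, ofReal_im], Vl_ofReal_re_pos l τ⟩, ?_⟩
  refine StrictAntiOn.of_tendsto_mul (strictAntiOn_shiftRatio (by positivity))
    (fun τ _ => shiftRatio_pos (by positivity) τ) (fun n => ?_)
    (fun τ _ => Vl_ofReal_re_pos l τ) (fun τ _ => tendsto_Vl_ofReal_re l τ)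
  exact fun _ hx _ hy hxy => div_le_div_of_nonneg_right
    (antitoneOn_prod_shiftRatio (range n) (fun j _ => by positivity) hx hy hxy) (by positivity)
end

section
/- For every l ∈ ℕ₀ and every ζ ∈ [0,1), the value V_l(iζ) is a positive real number, and the function ζ ↦ V_l(iζ) is strictly monotonously increasing on [0,1). -/
/-! With `s = l + 1`, `V_l(iζ) = h((s - ζ)/2) h((s + ζ)/2) / 2` for `h x = Γ(x) / Γ(x + 1/2)`.
Euler's limit formula turns this product into `lim n⁻¹ ∏_{j ≤ n} ((s+2j+1)² - ζ²) / ((s+2j)² - ζ²)`,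
and every factor increases with `ζ ∈ [0, s)`, so the product is monotone. Strictness comes from
splitting off the factor `j = 0` through `Γ(x + 1) = x Γ(x)`, which relates `s` to `s + 2`. -/

open Filter Topology Finset

noncomputable def gammaHalfRatio (x : ℝ) : ℝ := Real.Gamma x / Real.Gamma (x + 1 / 2)

noncomputable def gammaHalfRatioProd (s ζ : ℝ) : ℝ :=
  gammaHalfRatio ((s - ζ) / 2) * gammaHalfRatio ((s + ζ) / 2)

noncomputable def eulerFactor (s ζ : ℝ) (j : ℕ) : ℝ :=
  ((s + 2 * j + 1) ^ 2 - ζ ^ 2) / ((s + 2 * j) ^ 2 - ζ ^ 2)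

lemma sub_div_sub_strictMonoOn {A B : ℝ} (hBA : B < A) :
    StrictMonoOn (fun t => (A - t) / (B - t)) (Set.Iio B) := by
  intro u hu v hv huv
  simp only [Set.mem_Iio] at hu hv
  rw [div_lt_div_iff₀ (by linarith) (by linarith)]
  nlinarith

lemma eulerFactor_pos {s ζ : ℝ} (hζ : ζ ∈ Set.Ico 0 s) (j : ℕ) : 0 < eulerFactor s ζ j := by
  obtain ⟨hζ0, hζs⟩ := hζ
  have hj : (0 : ℝ) ≤ j := j.cast_nonneg
  unfold eulerFactor
  apply div_pos <;> nlinarith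

lemma eulerFactor_strictMonoOn (s : ℝ) (j : ℕ) :
    StrictMonoOn (eulerFactor s · j) (Set.Ico 0 s) := by
  rintro x ⟨hx0, hxs⟩ y ⟨hy0, hys⟩ hxy
  have hj : (0 : ℝ) ≤ j := j.cast_nonneg
  refine sub_div_sub_strictMonoOn (A := (s + 2 * j + 1) ^ 2) (by nlinarith)
    (Set.mem_Iio.mpr ?_) (Set.mem_Iio.mpr ?_) ?_ <;> nlinarith

lemma add_half_div_mul_add_half_div (s ζ c : ℝ) :
    ((s - ζ) / 2 + 1 / 2 + c) / ((s - ζ) / 2 + c) * (((s + ζ) / 2 + 1 / 2 + c) / ((s + ζ) / 2 + c))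
      = ((s + 2 * c + 1) ^ 2 - ζ ^ 2) / ((s + 2 * c) ^ 2 - ζ ^ 2) := by
  rw [div_mul_div_comm,
    ← div_div_div_cancel_right₀ (four_ne_zero' ℝ) ((s + 2 * c + 1) ^ 2 - ζ ^ 2)]
  congr 1 <;> ring

lemma gammaSeq_div_gammaSeq_add_half (x : ℝ) {n : ℕ} (hn : 0 < n) :
    Real.GammaSeq x n / Real.GammaSeq (x + 1 / 2) n =
      (∏ j ∈ range (n + 1), (x + 1 / 2 + j) / (x + j)) / √n := by
  have hn' : (0 : ℝ) < n := Nat.cast_pos.mpr hn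
  have hfac : (n.factorial : ℝ) ≠ 0 := Nat.cast_ne_zero.mpr n.factorial_ne_zero
  rw [Real.GammaSeq, Real.GammaSeq, Real.rpow_add hn', ← Real.sqrt_eq_rpow, prod_div_distrib,
    div_div_div_eq]
  have hpow : (n : ℝ) ^ x ≠ 0 := (Real.rpow_pos_of_pos hn' x).ne'
  have hsqrt : √(n : ℝ) ≠ 0 := (Real.sqrt_pos.mpr hn').ne'
  field_simp

lemma tendsto_gammaSeq_div_gammaSeq_add_half {x : ℝ} (hx : Real.Gamma (x + 1 / 2) ≠ 0) :
    Tendsto (fun n => Real.GammaSeq x n / Real.GammaSeq (x + 1 / 2) n) atTop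
      (𝓝 (gammaHalfRatio x)) :=
  (Real.GammaSeq_tendsto_Gamma x).div (Real.GammaSeq_tendsto_Gamma _) hx

lemma gammaHalfRatio_pos {x : ℝ} (hx : 0 < x) : 0 < gammaHalfRatio x :=
  div_pos (Real.Gamma_pos_of_pos hx) (Real.Gamma_pos_of_pos (by linarith))

lemma gammaHalfRatio_eq_mul_add_one {x : ℝ} (hx : x ≠ 0) :
    gammaHalfRatio x = (x + 1 / 2) / x * gammaHalfRatio (x + 1) := by
  by_cases hx' : x + 1 / 2 = 0
  · -- both sides vanish, as `Γ 0 = 0` in Mathlib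
    obtain rfl : x = -1 / 2 := by linarith
    norm_num [gammaHalfRatio]
  · rw [gammaHalfRatio, gammaHalfRatio, add_right_comm, Real.Gamma_add_one hx,
      Real.Gamma_add_one hx']
    grind

lemma gammaHalfRatioProd_pos {s ζ : ℝ} (hζ : ζ ∈ Set.Ico 0 s) : 0 < gammaHalfRatioProd s ζ :=
  mul_pos (gammaHalfRatio_pos (by linarith [hζ.2])) (gammaHalfRatio_pos (by linarith [hζ.1, hζ.2]))

lemma gammaHalfRatioProd_eq_eulerFactor_mul {s ζ : ℝ} (hζ : ζ ∈ Set.Ico 0 s) :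
    gammaHalfRatioProd s ζ = eulerFactor s ζ 0 * gammaHalfRatioProd (s + 2) ζ := by
  have e : eulerFactor s ζ 0 =
      ((s - ζ) / 2 + 1 / 2) / ((s - ζ) / 2) * (((s + ζ) / 2 + 1 / 2) / ((s + ζ) / 2)) := by
    simpa [eulerFactor] using (add_half_div_mul_add_half_div s ζ 0).symm
  rw [gammaHalfRatioProd, gammaHalfRatioProd, show (s + 2 - ζ) / 2 = (s - ζ) / 2 + 1 by ring,
    show (s + 2 + ζ) / 2 = (s + ζ) / 2 + 1 by ring,
    gammaHalfRatio_eq_mul_add_one (x := (s - ζ) / 2) (by linarith [hζ.2]),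
    gammaHalfRatio_eq_mul_add_one (x := (s + ζ) / 2) (by linarith [hζ.1, hζ.2]), e]
  ring

lemma tendsto_prod_eulerFactor_div {s ζ : ℝ} (hζ : ζ ∈ Set.Ico 0 s) :
    Tendsto (fun n : ℕ => (∏ j ∈ range (n + 1), eulerFactor s ζ j) / n) atTop
      (𝓝 (gammaHalfRatioProd s ζ)) := by
  have ha := Real.Gamma_pos_of_pos (show 0 < (s - ζ) / 2 + 1 / 2 by linarith [hζ.2])
  have hb := Real.Gamma_pos_of_pos (show 0 < (s + ζ) / 2 + 1 / 2 by linarith [hζ.1, hζ.2])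
  refine ((tendsto_gammaSeq_div_gammaSeq_add_half ha.ne').mul
    (tendsto_gammaSeq_div_gammaSeq_add_half hb.ne')).congr' ?_
  filter_upwards [eventually_gt_atTop 0] with n hn
  rw [gammaSeq_div_gammaSeq_add_half _ hn, gammaSeq_div_gammaSeq_add_half _ hn, div_mul_div_comm,
    ← prod_mul_distrib, Real.mul_self_sqrt n.cast_nonneg]
  congr 1
  exact prod_congr rfl fun j _ => add_half_div_mul_add_half_div s ζ j

lemma gammaHalfRatioProd_monotoneOn (s : ℝ) : MonotoneOn (gammaHalfRatioProd s) (Set.Ico 0 s) := by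
  intro x hx y hy hxy
  refine le_of_tendsto_of_tendsto' (tendsto_prod_eulerFactor_div hx)
    (tendsto_prod_eulerFactor_div hy) fun n => ?_
  exact div_le_div_of_nonneg_right (prod_le_prod (fun j _ => (eulerFactor_pos hx j).le)
    fun j _ => (eulerFactor_strictMonoOn s j).monotoneOn hx hy hxy) n.cast_nonneg

lemma gammaHalfRatioProd_strictMonoOn (s : ℝ) :
    StrictMonoOn (gammaHalfRatioProd s) (Set.Ico 0 s) := by
  intro x hx y hy hxy
  have hx₂ : x ∈ Set.Ico 0 (s + 2) := ⟨hx.1, by linarith [hx.2]⟩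
  have hy₂ : y ∈ Set.Ico 0 (s + 2) := ⟨hy.1, by linarith [hy.2]⟩
  rw [gammaHalfRatioProd_eq_eulerFactor_mul hx, gammaHalfRatioProd_eq_eulerFactor_mul hy]
  exact mul_lt_mul (eulerFactor_strictMonoOn s 0 hx hy hxy)
    (gammaHalfRatioProd_monotoneOn (s + 2) hx₂ hy₂ hxy.le) (gammaHalfRatioProd_pos hx₂)
    (eulerFactor_pos hy 0).le

lemma Vl_I_mul_ofReal (l : ℕ) (ζ : ℝ) :
    Vl l (Complex.I * ζ) = ((gammaHalfRatioProd (l + 1) ζ / 2 : ℝ) : ℂ) := by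
  have hI : Complex.I * (Complex.I * ζ) = -ζ := by rw [← mul_assoc, Complex.I_mul_I, neg_one_mul]
  have e₁ : ((l : ℂ) + 1 + -ζ) / 2 = (((l + 1 - ζ) / 2 : ℝ) : ℂ) := by push_cast; ring
  have e₂ : ((l : ℂ) + 1 - -ζ) / 2 = (((l + 1 + ζ) / 2 : ℝ) : ℂ) := by push_cast; ring
  have e₃ : ((l : ℂ) + 2 + -ζ) / 2 = (((l + 1 - ζ) / 2 + 1 / 2 : ℝ) : ℂ) := by push_cast; ring
  have e₄ : ((l : ℂ) + 2 - -ζ) / 2 = (((l + 1 + ζ) / 2 + 1 / 2 : ℝ) : ℂ) := by push_cast; ring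
  rw [Vl, hI, e₁, e₂, e₃, e₄]
  simp only [Complex.Gamma_ofReal, gammaHalfRatioProd, gammaHalfRatio]
  push_cast
  ring

/-- For every l ∈ ℕ₀ and every ζ ∈ [0,1) the value V_l(iζ) is a positive real number, and
ζ ↦ V_l(iζ) is strictly monotonously increasing on [0,1). -/
theorem Vl_imaginary_pos_strictMono (l : ℕ) :
    (∀ ζ : ℝ, ζ ∈ Set.Ico (0 : ℝ) 1 →
      (Vl l (Complex.I * (ζ : ℂ))).im = 0 ∧ 0 < (Vl l (Complex.I * (ζ : ℂ))).re) ∧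
    StrictMonoOn (fun ζ : ℝ => (Vl l (Complex.I * (ζ : ℂ))).re) (Set.Ico 0 1) := by
  have hsub : Set.Ico (0 : ℝ) 1 ⊆ Set.Ico 0 (l + 1) :=
    Set.Ico_subset_Ico_right (by linarith [l.cast_nonneg (α := ℝ)])
  simp only [Vl_I_mul_ofReal, Complex.ofReal_im, Complex.ofReal_re]
  refine ⟨fun ζ hζ => ⟨trivial, half_pos (gammaHalfRatioProd_pos (hsub hζ))⟩, ?_⟩
  exact fun x hx y hy hxy =>
    div_lt_div_of_pos_right (gammaHalfRatioProd_strictMonoOn _ (hsub hx) (hsub hy) hxy) two_pos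
end

section
/- For every τ ∈ ℝ one has (9 + 4τ²)·(1 + 2τ·sinh(πτ)) − (9 + (4 + 18π − 9π²/2)·τ²)·cosh(πτ) ≥ 0; equivalently, (9 + 4τ²)·(sech(πτ) + 2τ·tanh(πτ)) ≥ 9 + (4 + 18π − 9π²/2)·τ². -/
/-!
Put `x = π τ` and expand `sinh x`, `cosh x` in their Taylor series. The constant
`4 + 18π - 9π²/2` is exactly the one that cancels the `τ²` term, so the gap (the right-hand side
of the first inequality) equals `∑ₙ π^(2n+1) q(2n+4) / (2n+4)! · τ^(2n+4)` for an explicit cubic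
`q = gapCoeff`. Written in powers of `m - 4`, `q m` has positive coefficients as soon as
`3.14 < π < 3.15`, so every term of the series is nonnegative. Dividing by `cosh (π τ) > 0`
gives the second form.
-/

open Real Nat

lemma hasSum_sinh_sub_self (x : ℝ) :
    HasSum (fun n : ℕ => x ^ (2 * n + 3) / (2 * n + 3)!) (sinh x - x) := by
  simpa [Finset.sum_range_succ, mul_add] using (hasSum_nat_add_iff' 1).2 (hasSum_sinh x)

lemma hasSum_cosh_sub_one (x : ℝ) :
    HasSum (fun n : ℕ => x ^ (2 * n + 2) / (2 * n + 2)!) (cosh x - 1) := by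
  simpa [Finset.sum_range_succ, mul_add] using (hasSum_nat_add_iff' 1).2 (hasSum_cosh x)

lemma hasSum_cosh_sub_one_sub_sq_div_two (x : ℝ) :
    HasSum (fun n : ℕ => x ^ (2 * n + 4) / (2 * n + 4)!) (cosh x - 1 - x ^ 2 / 2) := by
  simpa [Finset.sum_range_succ, mul_add, sub_sub] using (hasSum_nat_add_iff' 2).2 (hasSum_cosh x)

noncomputable def gapCoeff (m : ℝ) : ℝ :=
  8 * m * (m - 1) * (m - 2) + 18 * π ^ 2 * m
    - (4 + 18 * π - 9 * π ^ 2 / 2) * π * m * (m - 1) - 9 * π ^ 3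

lemma gapCoeff_nonneg {m : ℝ} (hm : 4 ≤ m) : 0 ≤ gapCoeff m := by
  obtain ⟨t, ht, rfl⟩ : ∃ t, 0 ≤ t ∧ m = t + 4 := ⟨m - 4, by linarith, by ring⟩
  have hlo := sub_pos.2 pi_gt_d2
  have hhi := sub_pos.2 pi_lt_d2
  have hcube := mul_pos (mul_pos hlo hlo) hlo
  have hprod := mul_pos hlo hhi
  have c₀ : 0 ≤ 192 - 48 * π - 144 * π ^ 2 + 45 * π ^ 3 := by nlinarith
  have c₁ : 0 ≤ 208 - 28 * π - 108 * π ^ 2 + 63 / 2 * π ^ 3 := by nlinarith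
  have c₂ : 0 ≤ 72 - 4 * π - 18 * π ^ 2 + 9 / 2 * π ^ 3 := by nlinarith
  have hexpand : gapCoeff (t + 4) = (192 - 48 * π - 144 * π ^ 2 + 45 * π ^ 3)
      + (208 - 28 * π - 108 * π ^ 2 + 63 / 2 * π ^ 3) * t
      + (72 - 4 * π - 18 * π ^ 2 + 9 / 2 * π ^ 3) * t ^ 2 + 8 * t ^ 3 := by
    unfold gapCoeff; ring
  rw [hexpand]
  positivity

lemma gap_series_term_eq (τ : ℝ) (n : ℕ) :
    18 * τ * ((π * τ) ^ (2 * n + 3) / (2 * n + 3)!)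
        + 8 * τ ^ 3 * ((π * τ) ^ (2 * n + 1) / (2 * n + 1)!)
        - 9 * ((π * τ) ^ (2 * n + 4) / (2 * n + 4)!)
        - (4 + 18 * π - 9 * π ^ 2 / 2) * τ ^ 2 * ((π * τ) ^ (2 * n + 2) / (2 * n + 2)!)
      = π ^ (2 * n + 1) * gapCoeff (2 * n + 4) / (2 * n + 4)! * τ ^ (2 * n + 4) := by
  simp only [show 2 * n + 4 = (2 * n + 3) + 1 from rfl, show 2 * n + 3 = (2 * n + 2) + 1 from rfl,
    show 2 * n + 2 = (2 * n + 1) + 1 from rfl, factorial_succ, pow_succ, mul_pow]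
  unfold gapCoeff
  push_cast
  field_simp
  ring

lemma hasSum_gap (τ : ℝ) :
    HasSum (fun n : ℕ => π ^ (2 * n + 1) * gapCoeff (2 * n + 4) / (2 * n + 4)! * τ ^ (2 * n + 4))
      ((9 + 4 * τ ^ 2) * (1 + 2 * τ * sinh (π * τ))
        - (9 + (4 + 18 * π - 9 * π ^ 2 / 2) * τ ^ 2) * cosh (π * τ)) := by
  have hsum := (((hasSum_sinh_sub_self (π * τ)).mul_left (18 * τ)).add
      ((hasSum_sinh (π * τ)).mul_left (8 * τ ^ 3))).sub
      ((hasSum_cosh_sub_one_sub_sq_div_two (π * τ)).mul_left 9) |>.sub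
      ((hasSum_cosh_sub_one (π * τ)).mul_left ((4 + 18 * π - 9 * π ^ 2 / 2) * τ ^ 2))
  rw [funext (gap_series_term_eq τ)] at hsum
  convert hsum using 1
  · rfl
  · ring

/-- For every τ ∈ ℝ one has
(9+4τ²)(1 + 2τ sinh(πτ)) − (9 + (4+18π−9π²/2)τ²) cosh(πτ) ≥ 0; equivalently
(9+4τ²)(sech(πτ) + 2τ tanh(πτ)) ≥ 9 + (4+18π−9π²/2)τ². -/
theorem hyperbolic_ineq (τ : ℝ) :
    0 ≤ (9 + 4 * τ ^ 2) * (1 + 2 * τ * Real.sinh (Real.pi * τ))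
        - (9 + (4 + 18 * Real.pi - 9 * Real.pi ^ 2 / 2) * τ ^ 2) * Real.cosh (Real.pi * τ) ∧
    9 + (4 + 18 * Real.pi - 9 * Real.pi ^ 2 / 2) * τ ^ 2
      ≤ (9 + 4 * τ ^ 2) * (1 / Real.cosh (Real.pi * τ) + 2 * τ * Real.tanh (Real.pi * τ)) := by
  have hgap := (hasSum_gap τ).nonneg fun n => by
    have hq : 0 ≤ gapCoeff (2 * n + 4) := gapCoeff_nonneg (by linarith [n.cast_nonneg (α := ℝ)])
    exact mul_nonneg (by positivity) (Even.pow_nonneg ⟨n + 2, by ring⟩ τ)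
  refine ⟨hgap, ?_⟩
  rw [tanh_eq_sinh_div_cosh, mul_div_assoc', ← add_div, mul_div_assoc',
    le_div_iff₀ (cosh_pos _)]
  linarith
end

section
/- For every ν ∈ (0,1), with Υ_ν := √(1−ν²), one has (π·Υ_ν − sin(π·Υ_ν))/(Υ_ν·sin²(π·Υ_ν/2)) > 2. -/
/-!
With x = πΥ_ν ∈ (0, π) and 2 sin²(x/2) = 1 − cos x, the claim reads x (1 − cos x) < π (x − sin x).
This follows from the sharper x (1 − cos x) < 3 (x − sin x) on (0, π) (the Taylor expansions differ
by x⁵/60 + …) together with π > 3; the sharper inequality holds because the difference of the two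
sides vanishes at 0 and has derivative 4 sin(y/2) (sin(y/2) − (y/2) cos(y/2)), positive since
tan t > t on (0, π/2).
-/

/-- Υ_ν := √(1 − ν²). -/
noncomputable def Ups (ν : ℝ) : ℝ := Real.sqrt (1 - ν ^ 2)

open Real Set

lemma Real.one_sub_cos_eq_two_mul_sin_sq (x : ℝ) : 1 - cos x = 2 * sin (x / 2) ^ 2 := by
  have h := cos_sq (x / 2)
  rw [show 2 * (x / 2) = x by ring, cos_sq'] at h
  linarith

lemma Real.mul_sin_lt_two_mul_one_sub_cos {y : ℝ} (hy0 : 0 < y) (hyπ : y < π) :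
    y * sin y < 2 * (1 - cos y) := by
  have hs : 0 < sin (y / 2) := sin_pos_of_pos_of_lt_pi (by linarith) (by linarith)
  have hc : 0 < cos (y / 2) := cos_pos_of_mem_Ioo ⟨by linarith, by linarith⟩
  have htan : y / 2 * cos (y / 2) < sin (y / 2) := by
    rw [← lt_div_iff₀ hc, ← tan_eq_sin_div_cos]
    exact lt_tan (by linarith) (by linarith)
  have hsin : sin y = 2 * sin (y / 2) * cos (y / 2) := by
    rw [← sin_two_mul, mul_div_cancel₀ y two_ne_zero]
  rw [one_sub_cos_eq_two_mul_sin_sq, hsin]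
  nlinarith [mul_lt_mul_of_pos_left htan hs]

lemma Real.mul_one_sub_cos_lt_three_mul_sub_sin {x : ℝ} (hx0 : 0 < x) (hxπ : x < π) :
    x * (1 - cos x) < 3 * (x - sin x) := by
  let g : ℝ → ℝ := fun y => 3 * (y - sin y) - y * (1 - cos y)
  have hg' (y : ℝ) : HasDerivAt g (2 * (1 - cos y) - y * sin y) y := by
    have h := (((hasDerivAt_id' y).sub (hasDerivAt_sin y)).const_mul 3).sub
      ((hasDerivAt_id' y).mul ((hasDerivAt_cos y).const_sub 1))
    exact h.congr_deriv (by ring)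
  have hmono : StrictMonoOn g (Icc 0 π) := by
    refine strictMonoOn_of_deriv_pos (convex_Icc 0 π) (by fun_prop) fun y hy => ?_
    rw [interior_Icc] at hy
    rw [(hg' y).deriv, sub_pos]
    exact mul_sin_lt_two_mul_one_sub_cos hy.1 hy.2
  have hg := hmono ⟨le_rfl, pi_pos.le⟩ ⟨hx0.le, hxπ.le⟩ hx0
  simp only [g, sin_zero, cos_zero] at hg
  linarith

lemma Ups_mem_Ioo {ν : ℝ} (hν : ν ∈ Ioo (0 : ℝ) 1) : Ups ν ∈ Ioo (0 : ℝ) 1 := by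
  obtain ⟨hν0, hν1⟩ := hν
  refine ⟨sqrt_pos.mpr (by nlinarith), ?_⟩
  rw [Ups, sqrt_lt' one_pos]
  nlinarith

/-- For every ν ∈ (0,1): (πΥ_ν − sin(πΥ_ν))/(Υ_ν sin²(πΥ_ν/2)) > 2. -/
theorem f2_gt_two (ν : ℝ) (hν : ν ∈ Set.Ioo (0 : ℝ) 1) :
    2 < (Real.pi * Ups ν - Real.sin (Real.pi * Ups ν))
        / (Ups ν * Real.sin (Real.pi * Ups ν / 2) ^ 2) := by
  obtain ⟨hu0, hu1⟩ := Ups_mem_Ioo hν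
  set u := Ups ν
  have hx0 : 0 < π * u := mul_pos pi_pos hu0
  have hxπ : π * u < π := mul_lt_of_lt_one_right pi_pos hu1
  have hsin : 0 < sin (π * u / 2) := sin_pos_of_pos_of_lt_pi (by linarith) (by linarith)
  have hsub : 0 < π * u - sin (π * u) := sub_pos.mpr (sin_lt hx0)
  have hkey : π * (2 * (u * sin (π * u / 2) ^ 2)) < π * (π * u - sin (π * u)) := by
    have h3 := mul_one_sub_cos_lt_three_mul_sub_sin hx0 hxπ
    rw [one_sub_cos_eq_two_mul_sin_sq] at h3
    nlinarith [pi_gt_three]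
  rw [lt_div_iff₀ (by positivity)]
  exact lt_of_mul_lt_mul_left hkey pi_pos.le
end
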